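/- arXiv:2506.15602 — 3 statements merged into one kernel-verified Lean document; each statement's English description precedes it below -/
import Mathlib

section
/- For every 1 ≤ k ≤ K and every x ∈ S_k, the mean hitting time of the optimal level is upper-bounded by m(x) ≤ Σ_{ℓ=1}^{k} h_max(X_k,S_ℓ) / p_min(X_ℓ, S_{[0,ℓ−1]}), where p_min(X_ℓ, S_{[0,ℓ−1]}) = min_{x∈S_ℓ} p(x, S_{[0,ℓ−1]}) (which is positive by assumption). -/
open Finset

/-- A finite state space partitioned into fitness levels `S_0, …, S_K`
(`lev x = k` means `x ∈ S_k`), together with an elitist row-stochastic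
transition matrix `p`. -/
structure LevelChain (S : Type*) [Fintype S] where
  /-- the number of non-optimal levels -/
  K : ℕ
  /-- the level of each state -/
  lev : S → ℕ
  one_le_K : 1 ≤ K
  lev_le : ∀ x, lev x ≤ K
  level_nonempty : ∀ k ≤ K, ∃ x, lev x = k
  /-- transition probabilities -/
  p : S → S → ℝ
  p_nonneg : ∀ x y, 0 ≤ p x y
  p_row_sum : ∀ x, ∑ y, p x y = 1
  elitist : ∀ x y, lev x < lev y → p x y = 0

variable {S : Type*} [Fintype S]

/-- The fitness level `S_k`. -/
def LevelChain.level (c : LevelChain S) (k : ℕ) : Finset S :=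
  Finset.univ.filter fun x => c.lev x = k

/-- The union of levels `S_{[i,j]} = S_i ∪ ⋯ ∪ S_j`. -/
def LevelChain.levels (c : LevelChain S) (i j : ℕ) : Finset S :=
  Finset.univ.filter fun x => i ≤ c.lev x ∧ c.lev x ≤ j

/-- `p(x, A) = Σ_{y ∈ A} p(x, y)`. -/
def LevelChain.pSet (c : LevelChain S) (x : S) (A : Finset S) : ℝ :=
  ∑ y ∈ A, c.p x y

/-- The standing reachability assumption: from every non-optimal state one can
move to a better level with positive probability. -/
def LevelChain.Reachable (c : LevelChain S) : Prop :=
  ∀ k, 1 ≤ k → k ≤ c.K → ∀ x, c.lev x = k → 0 < c.pSet x (c.levels 0 (k - 1))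

/-- Conditional transition probability `r(x, S_j)`:
`r(x,S_j) = p(x,S_j)/(1 − p(x,S_k))` for `j ≠ k = lev x`, and `r(x,S_k) = 0`. -/
noncomputable def LevelChain.r (c : LevelChain S) (x : S) (j : ℕ) : ℝ :=
  if j = c.lev x then 0
  else c.pSet x (c.level j) / (1 - c.pSet x (c.level (c.lev x)))

/-- `r_min(X_k, S_j) = min_{x ∈ S_k} r(x, S_j)`. -/
noncomputable def LevelChain.rmin (c : LevelChain S) (k j : ℕ) : ℝ :=
  sInf ((fun x => c.r x j) '' {x | c.lev x = k})

/-- `r_max(X_k, S_j) = max_{x ∈ S_k} r(x, S_j)`. -/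
noncomputable def LevelChain.rmax (c : LevelChain S) (k j : ℕ) : ℝ :=
  sSup ((fun x => c.r x j) '' {x | c.lev x = k})

/-- `m` is the mean hitting time of the optimal level `S_0`. -/
def LevelChain.IsMeanHittingTime (c : LevelChain S) (m : S → ℝ) : Prop :=
  (∀ x, 0 ≤ m x) ∧
  (∀ x, c.lev x = 0 → m x = 0) ∧
  (∀ x, c.lev x ≠ 0 → m x = 1 + ∑ y, c.p x y * m y)

/-- `mbar` is the mean level-leaving time on `S ∖ S_0`. -/
def LevelChain.IsLevelLeavingTime (c : LevelChain S) (mbar : S → ℝ) : Prop :=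
  (∀ x, c.lev x ≠ 0 → 0 ≤ mbar x) ∧
  (∀ x, c.lev x ≠ 0 → mbar x = 1 + ∑ y ∈ c.level (c.lev x), c.p x y * mbar y)

/-- `h ℓ x` is the probability of hitting level `S_ℓ` starting from `x`. -/
def LevelChain.IsHitProb (c : LevelChain S) (h : ℕ → S → ℝ) : Prop :=
  (∀ ℓ x, 0 ≤ h ℓ x ∧ h ℓ x ≤ 1) ∧
  (∀ ℓ x, c.lev x = ℓ → h ℓ x = 1) ∧
  (∀ ℓ x, c.lev x < ℓ → h ℓ x = 0) ∧
  (∀ ℓ x, ℓ < c.lev x →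
    h ℓ x = ∑ y ∈ c.levels ℓ (c.lev x), c.p x y * h ℓ y)

/-!
Put `g(x) = Σ_{ℓ=1}^{K} h(x,S_ℓ) / p_min(X_ℓ, S_{[0,ℓ−1]})`. One step of the chain from
`x ∈ S_k` leaves every term with `ℓ ≠ k` unchanged on average (`h(·,S_ℓ)` is harmonic there),
while the `ℓ = k` term drops from `1/p_min` to `p(x,S_k)/p_min`, a loss of
`p(x,S_{[0,k−1]})/p_min ≥ 1`. So `g ≥ 1 + Pg` off `S_0`, and `m − g ≤ P(m − g)` there.
By the maximum principle `m ≤ g`: a maximiser of `m − g` of least level cannot lie in `S_0`,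
and it would pass its maximal value on to a better level that it reaches with positive
probability. Finally `h(x,S_ℓ) = 0` for `ℓ > k`.
-/

namespace LevelChain

variable (c : LevelChain S)

noncomputable def pmin (ℓ : ℕ) : ℝ :=
  sInf ((fun z => c.pSet z (c.levels 0 (ℓ - 1))) '' {z | c.lev z = ℓ})

theorem pmin_nonneg (ℓ : ℕ) : 0 ≤ c.pmin ℓ :=
  Real.sInf_nonneg <| by
    rintro _ ⟨z, -, rfl⟩
    exact sum_nonneg fun y _ => c.p_nonneg z y

theorem pmin_le (x : S) : c.pmin (c.lev x) ≤ c.pSet x (c.levels 0 (c.lev x - 1)) :=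
  csInf_le (Set.toFinite _).bddBelow ⟨x, rfl, rfl⟩

variable {c}

theorem pmin_pos (hreach : c.Reachable) {ℓ : ℕ} (h1 : 1 ≤ ℓ) (h2 : ℓ ≤ c.K) :
    0 < c.pmin ℓ := by
  obtain ⟨x, hx⟩ := c.level_nonempty ℓ h2
  refine ((Set.toFinite _).lt_csInf_iff (Set.Nonempty.image _ ⟨x, hx⟩)).2 ?_
  rintro _ ⟨z, hz, rfl⟩
  exact hreach ℓ h1 h2 z hz

theorem exists_p_pos_of_lev_ne_zero (hreach : c.Reachable) {x : S} (hx : c.lev x ≠ 0) :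
    ∃ y, c.lev y < c.lev x ∧ 0 < c.p x y := by
  have hpos := hreach _ (Nat.one_le_iff_ne_zero.2 hx) (c.lev_le x) x rfl
  rw [pSet, ← sum_const_zero] at hpos
  obtain ⟨y, hy, hpy⟩ := exists_lt_of_sum_lt hpos
  simp only [levels, mem_filter, mem_univ, true_and] at hy
  exact ⟨y, by omega, hpy⟩

theorem eq_of_le_sum_p_mul {d : S → ℝ} {M : ℝ} (hM : ∀ y, d y ≤ M) {x : S}
    (hx : M ≤ ∑ y, c.p x y * d y) {y : S} (hy : 0 < c.p x y) : d y = M := by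
  have hnonneg : ∀ z ∈ univ, 0 ≤ c.p x z * (M - d z) := fun z _ =>
    mul_nonneg (c.p_nonneg x z) (sub_nonneg.2 (hM z))
  have hsum : ∑ z, c.p x z * (M - d z) = 0 := by
    refine le_antisymm ?_ (sum_nonneg hnonneg)
    simp only [mul_sub, sum_sub_distrib, ← sum_mul, c.p_row_sum, one_mul]
    linarith
  have hterm := (sum_eq_zero_iff_of_nonneg hnonneg).1 hsum y (mem_univ y)
  linarith [(mul_eq_zero.1 hterm).resolve_left hy.ne']

theorem nonpos_of_le_sum_p_mul (hreach : c.Reachable) {d : S → ℝ}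
    (h0 : ∀ x, c.lev x = 0 → d x ≤ 0) (hsub : ∀ x, c.lev x ≠ 0 → d x ≤ ∑ y, c.p x y * d y)
    (x : S) : d x ≤ 0 := by
  by_contra! hx
  obtain ⟨x₀, -, hmax⟩ := exists_max_image univ d ⟨x, mem_univ x⟩
  obtain ⟨x₁, hx₁, hmin⟩ :=
    exists_min_image (univ.filter fun y => d y = d x₀) c.lev ⟨x₀, by simp⟩
  rw [mem_filter] at hx₁
  have hlev : c.lev x₁ ≠ 0 := fun h =>
    (h0 x₁ h).not_gt (hx₁.2 ▸ hx.trans_le (hmax x (mem_univ x)))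
  obtain ⟨y, hlt, hpy⟩ := exists_p_pos_of_lev_ne_zero hreach hlev
  have hy : d y = d x₀ :=
    eq_of_le_sum_p_mul (fun z => hmax z (mem_univ z)) (hx₁.2 ▸ hsub x₁ hlev) hpy
  exact (hmin y (by simp [hy])).not_gt hlt

theorem IsMeanHittingTime.le_of_superharmonic (hreach : c.Reachable) {m g : S → ℝ}
    (hm : c.IsMeanHittingTime m) (hg0 : ∀ x, c.lev x = 0 → 0 ≤ g x)
    (hg : ∀ x, c.lev x ≠ 0 → 1 + ∑ y, c.p x y * g y ≤ g x) (x : S) : m x ≤ g x := by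
  refine sub_nonpos.1 (nonpos_of_le_sum_p_mul hreach (d := fun z => m z - g z) ?_ ?_ x)
  · intro z hz
    linarith [hm.2.1 z hz, hg0 z hz]
  · intro z hz
    simp only [mul_sub, sum_sub_distrib]
    linarith [hm.2.2 z hz, hg z hz]

theorem pSet_levels_add_pSet_level {x : S} (hx : c.lev x ≠ 0) :
    c.pSet x (c.levels 0 (c.lev x - 1)) + c.pSet x (c.level (c.lev x)) = 1 := by
  rw [← c.p_row_sum x, pSet, pSet, levels, level, sum_filter, sum_filter, ← sum_add_distrib]
  refine sum_congr rfl fun y _ => ?_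
  split_ifs
  · omega
  · rw [add_zero]
  · rw [zero_add]
  · rw [add_zero, c.elitist x y (by omega)]

variable {h : ℕ → S → ℝ}

theorem IsHitProb.p_mul_eq_zero (hh : c.IsHitProb h) {ℓ : ℕ} {x y : S}
    (hy : c.lev y < ℓ ∨ c.lev x < c.lev y) : c.p x y * h ℓ y = 0 := by
  rcases hy with hy | hy
  · rw [hh.2.2.1 ℓ y hy, mul_zero]
  · rw [c.elitist x y hy, zero_mul]

theorem IsHitProb.sum_p_mul_of_ne (hh : c.IsHitProb h) {ℓ : ℕ} {x : S} (hne : ℓ ≠ c.lev x) :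
    ∑ y, c.p x y * h ℓ y = h ℓ x := by
  rcases hne.lt_or_gt with hlt | hgt
  · rw [hh.2.2.2 ℓ x hlt, levels, sum_filter]
    refine sum_congr rfl fun y _ => ?_
    split_ifs with hy
    · rfl
    · exact hh.p_mul_eq_zero (by omega)
  · rw [hh.2.2.1 ℓ x hgt]
    exact sum_eq_zero fun y _ => hh.p_mul_eq_zero (by omega)

theorem IsHitProb.sum_p_mul_self (hh : c.IsHitProb h) (x : S) :
    ∑ y, c.p x y * h (c.lev x) y = c.pSet x (c.level (c.lev x)) := by
  rw [pSet, level, sum_filter]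
  refine sum_congr rfl fun y _ => ?_
  split_ifs with hy
  · rw [hh.2.1 _ y hy, mul_one]
  · exact hh.p_mul_eq_zero (by omega)

theorem IsHitProb.sum_p_mul (hh : c.IsHitProb h) {x : S} (hx : c.lev x ≠ 0) (ℓ : ℕ) :
    ∑ y, c.p x y * h ℓ y =
      h ℓ x - if ℓ = c.lev x then c.pSet x (c.levels 0 (c.lev x - 1)) else 0 := by
  split_ifs with hℓ
  · subst hℓ
    rw [hh.sum_p_mul_self, hh.2.1 _ x rfl]
    linarith [pSet_levels_add_pSet_level hx]
  · rw [hh.sum_p_mul_of_ne hℓ, sub_zero]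

variable (c h) in
noncomputable def hitTimeBound (x : S) : ℝ :=
  ∑ ℓ ∈ Icc 1 c.K, h ℓ x / c.pmin ℓ

theorem hitTimeBound_nonneg (hh : c.IsHitProb h) (x : S) : 0 ≤ c.hitTimeBound h x :=
  sum_nonneg fun ℓ _ => div_nonneg (hh.1 ℓ x).1 (c.pmin_nonneg ℓ)

theorem hitTimeBound_eq_sum_Icc_lev (hh : c.IsHitProb h) (x : S) :
    c.hitTimeBound h x = ∑ ℓ ∈ Icc 1 (c.lev x), h ℓ x / c.pmin ℓ := by
  refine (sum_subset (Icc_subset_Icc le_rfl (c.lev_le x)) fun ℓ hℓ hℓ' => ?_).symm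
  simp only [mem_Icc] at hℓ hℓ'
  rw [hh.2.2.1 ℓ x (by omega), zero_div]

theorem one_add_sum_p_mul_hitTimeBound_le (hreach : c.Reachable) (hh : c.IsHitProb h)
    {x : S} (hx : c.lev x ≠ 0) :
    1 + ∑ y, c.p x y * c.hitTimeBound h y ≤ c.hitTimeBound h x := by
  have hk : c.lev x ∈ Icc 1 c.K := mem_Icc.2 ⟨Nat.one_le_iff_ne_zero.2 hx, c.lev_le x⟩
  have hdrift : ∑ y, c.p x y * c.hitTimeBound h y =
      c.hitTimeBound h x - c.pSet x (c.levels 0 (c.lev x - 1)) / c.pmin (c.lev x) := by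
    simp only [hitTimeBound, mul_sum, ← mul_div_assoc]
    rw [sum_comm]
    simp only [← sum_div, hh.sum_p_mul hx, sub_div, sum_sub_distrib, ite_div, zero_div,
      sum_ite_eq', if_pos hk]
  have hloss : 1 ≤ c.pSet x (c.levels 0 (c.lev x - 1)) / c.pmin (c.lev x) :=
    (one_le_div (pmin_pos hreach (mem_Icc.1 hk).1 (mem_Icc.1 hk).2)).2 (c.pmin_le x)
  linarith

end LevelChain

/-- For every `1 ≤ k ≤ K` and every `x ∈ S_k`, the mean hitting time
of the optimal level is upper-bounded by
`m(x) ≤ Σ_{ℓ=1}^{k} h_max(X_k,S_ℓ) / p_min(X_ℓ, S_{[0,ℓ−1]})`. -/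
theorem meanHittingTime_upper_bound
    (c : LevelChain S) (hreach : c.Reachable)
    (m : S → ℝ) (h : ℕ → S → ℝ)
    (hm : c.IsMeanHittingTime m) (hh : c.IsHitProb h) :
    ∀ k, 1 ≤ k → k ≤ c.K → ∀ x, c.lev x = k →
      m x ≤ ∑ ℓ ∈ Finset.Icc 1 k,
        sSup (h ℓ '' {z | c.lev z = k}) /
          sInf ((fun z => c.pSet z (c.levels 0 (ℓ - 1))) '' {z | c.lev z = ℓ}) := by
  rintro k - - x rfl
  calc m x ≤ c.hitTimeBound h x :=
        hm.le_of_superharmonic hreach (fun z _ => c.hitTimeBound_nonneg hh z)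
          (fun z hz => c.one_add_sum_p_mul_hitTimeBound_le hreach hh hz) x
    _ = ∑ ℓ ∈ Icc 1 (c.lev x), h ℓ x / c.pmin ℓ := c.hitTimeBound_eq_sum_Icc_lev hh x
    _ ≤ _ := sum_le_sum fun ℓ _ =>
        div_le_div_of_nonneg_right
          (le_csSup (Set.toFinite (h ℓ '' {z | c.lev z = c.lev x})).bddAbove ⟨x, rfl, rfl⟩)
          (c.pmin_nonneg ℓ)
end

section
/- Let 1 ≤ ℓ < k ≤ K and let coefficients c_{j,ℓ} ∈ [0,1] be given for ℓ ≤ j ≤ k with c_{ℓ,ℓ} = 1. If for every j with ℓ < j ≤ k one has c_{j,ℓ} ≤ min_{x∈S_j} ( r(x,S_ℓ) + Σ_{i=ℓ+1}^{j−1} r(x,S_i) · c_{i,ℓ} ), then c_{j,ℓ} ≤ h_min(X_j,S_ℓ) for every ℓ < j ≤ k. -/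
open Finset

variable {S : Type*} [Fintype S]

/-!
Strong induction on the level `j`. Let `z` minimise `h(·, S_ℓ)` on `S_j`. One step of the chain
from `z` lands in `S_j` with probability `q = p(z, S_j) < 1` (reachability), where `h` is at least
`h(z, S_ℓ)`, and in a level `S_i`, `ℓ ≤ i < j`, where `h` is at least `c_{i,ℓ}` by induction. Hence
`(1 - q) h(z, S_ℓ) ≥ Σ_i p(z, S_i) c_{i,ℓ}`, and dividing by `1 - q` turns the right-hand side into
the `r`-expression that bounds `c_{j,ℓ}`.
-/

namespace LevelChain

variable {c : LevelChain S}

lemma sum_levels (c : LevelChain S) (a b : ℕ) (f : S → ℝ) :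
    ∑ y ∈ c.levels a b, f y = ∑ i ∈ Icc a b, ∑ y ∈ c.level i, f y := by
  classical
  rw [show c.levels a b = (Icc a b).biUnion c.level by ext x; simp [levels, level],
    sum_biUnion]
  intro i _ j _ hij
  exact disjoint_left.2 fun x hi hj => hij ((mem_filter.1 hi).2.symm.trans (mem_filter.1 hj).2)

lemma pSet_level_lev_lt_one (hreach : c.Reachable) {x : S} (hx : 1 ≤ c.lev x) :
    c.pSet x (c.level (c.lev x)) < 1 := by
  classical
  have hdisj : Disjoint (c.level (c.lev x)) (c.levels 0 (c.lev x - 1)) := by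
    simp only [disjoint_left, level, levels, mem_filter]
    omega
  have hsum : c.pSet x (c.level (c.lev x)) + c.pSet x (c.levels 0 (c.lev x - 1)) ≤ 1 := by
    rw [pSet, pSet, ← sum_union hdisj, ← c.p_row_sum x]
    exact sum_le_sum_of_subset_of_nonneg (subset_univ _) fun y _ _ => c.p_nonneg x y
  linarith [hreach _ hx (c.lev_le x) x rfl]

lemma sum_r_mul (x : S) {s : Finset ℕ} (hs : c.lev x ∉ s) (f : ℕ → ℝ) :
    ∑ i ∈ s, c.r x i * f i
      = (∑ i ∈ s, c.pSet x (c.level i) * f i) / (1 - c.pSet x (c.level (c.lev x))) := by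
  rw [sum_div]
  refine sum_congr rfl fun i hi => ?_
  rw [r, if_neg (ne_of_mem_of_not_mem hi hs), div_mul_eq_mul_div]

lemma IsHitProb.sum_pSet_mul_le {h : ℕ → S → ℝ} (hh : c.IsHitProb h) {ℓ : ℕ} {x : S}
    (hx : ℓ < c.lev x) (b : ℕ → ℝ)
    (hb : ∀ y, ℓ ≤ c.lev y → c.lev y ≤ c.lev x → b (c.lev y) ≤ h ℓ y) :
    ∑ i ∈ Icc ℓ (c.lev x), c.pSet x (c.level i) * b i ≤ h ℓ x := by
  rw [hh.2.2.2 ℓ x hx, sum_levels]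
  refine sum_le_sum fun i hi => ?_
  rw [pSet, sum_mul]
  refine sum_le_sum fun y hy => ?_
  obtain rfl := (mem_filter.1 hy).2
  obtain ⟨hℓy, hyx⟩ := mem_Icc.1 hi
  exact mul_le_mul_of_nonneg_left (hb y hℓy hyx) (c.p_nonneg x y)

theorem le_hitProb_of_le_sum_r_mul (hreach : c.Reachable) {h : ℕ → S → ℝ} (hh : c.IsHitProb h)
    {ℓ j : ℕ} (hℓj : ℓ < j) (b : ℕ → ℝ)
    (hb : ∀ y, ℓ ≤ c.lev y → c.lev y < j → b (c.lev y) ≤ h ℓ y)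
    (hbj : ∀ x, c.lev x = j → b j ≤ ∑ i ∈ Ico ℓ j, c.r x i * b i) {x : S} (hx : c.lev x = j) :
    b j ≤ h ℓ x := by
  classical
  have hxj : x ∈ c.level j := mem_filter.2 ⟨mem_univ x, hx⟩
  obtain ⟨z, hz, hzmin⟩ := (c.level j).exists_min_image (h ℓ) ⟨x, hxj⟩
  suffices b j ≤ h ℓ z from this.trans (hzmin x hxj)
  obtain rfl : c.lev z = j := (mem_filter.1 hz).2
  have hq : 0 < 1 - c.pSet z (c.level (c.lev z)) :=
    sub_pos.2 (pSet_level_lev_lt_one hreach (by omega))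
  have hstep := hh.sum_pSet_mul_le hℓj (fun i => if i = c.lev z then h ℓ z else b i)
    fun y hℓy hyz => by
      rcases hyz.eq_or_lt with hyz | hyz
      · simpa [hyz] using hzmin y (mem_filter.2 ⟨mem_univ y, hyz⟩)
      · simpa [hyz.ne] using hb y hℓy hyz
  rw [← Ico_insert_right hℓj.le, sum_insert (by simp), if_pos rfl,
    sum_congr rfl fun i hi => by rw [if_neg (mem_Ico.1 hi).2.ne]] at hstep
  have hbz := hbj z rfl
  rw [sum_r_mul z (by simp), le_div_iff₀ hq] at hbz
  nlinarith

end LevelChain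

theorem lower_coefficients_le_hitProb_general
    (c : LevelChain S) (hreach : c.Reachable)
    (h : ℕ → S → ℝ) (hh : c.IsHitProb h)
    (ℓ k : ℕ)
    (cf : ℕ → ℝ)
    (hcfdiag : cf ℓ = 1)
    (hrec : ∀ j, ℓ < j → j ≤ k → ∀ x, c.lev x = j →
      cf j ≤ c.r x ℓ + ∑ i ∈ Finset.Icc (ℓ + 1) (j - 1), c.r x i * cf i) :
    ∀ j, ℓ < j → j ≤ k → ∀ x, c.lev x = j → cf j ≤ h ℓ x := by
  intro j
  induction j using Nat.strong_induction_on with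
  | _ j ih =>
  intro hℓj hjk x hx
  refine c.le_hitProb_of_le_sum_r_mul hreach hh hℓj cf (fun y hℓy hyj => ?_) (fun z hz => ?_) hx
  · rcases hℓy.eq_or_lt with hy | hy
    · rw [← hy, hcfdiag, hh.2.1 ℓ y hy.symm]
    · exact ih _ hyj hy (by omega) y rfl
  · rw [← insert_Ico_add_one_left_eq_Ico hℓj, sum_insert (by simp), hcfdiag, mul_one]
    convert hrec j hℓj hjk z hz using 3
    ext i
    simp only [mem_Ico, mem_Icc]
    omega

/-- Lower-bound drift condition: if `c_{ℓ,ℓ} = 1` and for every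
`ℓ < j ≤ k` the coefficient satisfies
`c_{j,ℓ} ≤ min_{x∈S_j}( r(x,S_ℓ) + Σ_{i=ℓ+1}^{j−1} r(x,S_i)·c_{i,ℓ} )`,
then `c_{j,ℓ} ≤ h_min(X_j,S_ℓ)` for every `ℓ < j ≤ k`. -/
theorem lower_coefficients_le_hitProb
    (c : LevelChain S) (hreach : c.Reachable)
    (h : ℕ → S → ℝ) (hh : c.IsHitProb h)
    (ℓ k : ℕ) (hℓ : 1 ≤ ℓ) (hℓk : ℓ < k) (hk : k ≤ c.K)
    (cf : ℕ → ℝ)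
    (hcf01 : ∀ j, ℓ ≤ j → j ≤ k → 0 ≤ cf j ∧ cf j ≤ 1)
    (hcfdiag : cf ℓ = 1)
    (hrec : ∀ j, ℓ < j → j ≤ k → ∀ x, c.lev x = j →
      cf j ≤ c.r x ℓ + ∑ i ∈ Finset.Icc (ℓ + 1) (j - 1), c.r x i * cf i) :
    ∀ j, ℓ < j → j ≤ k → ∀ x, c.lev x = j → cf j ≤ h ℓ x :=
  lower_coefficients_le_hitProb_general c hreach h hh ℓ k cf hcfdiag hrec
end

section
/- Let 1 ≤ ℓ < k ≤ K and let coefficients c_{j,ℓ} ∈ [0,1] be given for ℓ ≤ j ≤ k with c_{ℓ,ℓ} = 1. If for every j with ℓ < j ≤ k one has c_{j,ℓ} ≥ max_{x∈S_j} ( r(x,S_ℓ) + Σ_{i=ℓ+1}^{j−1} r(x,S_i) · c_{i,ℓ} ), then c_{j,ℓ} ≥ h_max(X_j,S_ℓ) for every ℓ < j ≤ k. -/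
open Finset

variable {S : Type*} [Fintype S]

/-!
Let `x₀` maximize `h(·, S_ℓ)` on `S_j`. One step of the chain from `x₀` either stays in `S_j`,
where `h` is at most `h(x₀, S_ℓ)`, or lands in some `S_i` with `ℓ ≤ i < j`, where by induction
on `j` the value of `h` is at most `c_{i,ℓ}`. Solving the resulting inequality for `h(x₀, S_ℓ)`,
which is possible because `1 - p(x₀, S_j) > 0`, bounds it by the `r`-weighted sum in the
hypothesis, hence by `c_{j,ℓ}`.
-/

namespace LevelChain

variable (c : LevelChain S)

theorem mem_level {x : S} {i : ℕ} : x ∈ c.level i ↔ c.lev x = i := by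
  simp [level]

theorem sum_levels_eq_sum_Icc {M : Type*} [AddCommMonoid M] (f : S → M) (a b : ℕ) :
    ∑ y ∈ c.levels a b, f y = ∑ i ∈ Icc a b, ∑ y ∈ c.level i, f y := by
  rw [← sum_fiberwise_of_maps_to (g := c.lev) (t := Icc a b)
    (fun y hy => by simpa [levels] using hy)]
  refine sum_congr rfl fun i hi => sum_congr ?_ fun _ _ => rfl
  ext y
  simp only [levels, level, mem_filter, mem_univ, true_and]
  constructor
  · exact And.right
  · rintro rfl
    simpa using hi

theorem sum_level_mul_le (x : S) (i : ℕ) {f : S → ℝ} {m : ℝ}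
    (hf : ∀ y ∈ c.level i, f y ≤ m) :
    ∑ y ∈ c.level i, c.p x y * f y ≤ c.pSet x (c.level i) * m := by
  rw [pSet, sum_mul]
  exact sum_le_sum fun y hy => mul_le_mul_of_nonneg_left (hf y hy) (c.p_nonneg x y)

theorem one_sub_pSet_level_pos (hreach : c.Reachable) {x : S} (hx : 1 ≤ c.lev x) :
    0 < 1 - c.pSet x (c.level (c.lev x)) := by
  have hsplit := sum_filter_add_sum_filter_not univ (fun y => c.lev y = c.lev x) (c.p x)
  rw [c.p_row_sum] at hsplit
  have hlower : c.pSet x (c.levels 0 (c.lev x - 1)) ≤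
      ∑ y ∈ univ.filter (fun y => c.lev y ≠ c.lev x), c.p x y := by
    refine sum_le_sum_of_subset_of_nonneg (fun y hy => ?_) fun y _ _ => c.p_nonneg x y
    simp only [levels, mem_filter, mem_univ, true_and] at hy ⊢
    omega
  have hreach_x := hreach _ hx (c.lev_le x) x rfl
  rw [pSet, level]
  linarith

theorem r_of_ne {x : S} {i : ℕ} (hi : i ≠ c.lev x) :
    c.r x i = c.pSet x (c.level i) / (1 - c.pSet x (c.level (c.lev x))) :=
  if_neg hi

theorem hitProb_le_sum_r_mul_of_max (hreach : c.Reachable) {h : ℕ → S → ℝ} (hh : c.IsHitProb h)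
    {ℓ n : ℕ} (hℓn : ℓ ≤ n) (b : ℕ → ℝ) {x : S} (hx : c.lev x = n + 1)
    (hmax : ∀ y ∈ c.level (n + 1), h ℓ y ≤ h ℓ x)
    (hbelow : ∀ i ∈ Icc ℓ n, ∀ y ∈ c.level i, h ℓ y ≤ b i) :
    h ℓ x ≤ ∑ i ∈ Icc ℓ n, c.r x i * b i := by
  obtain ⟨-, -, -, hh_step⟩ := hh
  set D := 1 - c.pSet x (c.level (n + 1))
  have hD : 0 < D := by simpa only [hx] using c.one_sub_pSet_level_pos hreach (x := x) (by omega)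
  have hstep : h ℓ x = ∑ i ∈ Icc ℓ n, ∑ y ∈ c.level i, c.p x y * h ℓ y
      + ∑ y ∈ c.level (n + 1), c.p x y * h ℓ y := by
    rw [hh_step ℓ x (by omega), hx, sum_levels_eq_sum_Icc, sum_Icc_succ_top (by omega)]
  have hlow : ∑ i ∈ Icc ℓ n, ∑ y ∈ c.level i, c.p x y * h ℓ y ≤
      ∑ i ∈ Icc ℓ n, c.pSet x (c.level i) * b i :=
    sum_le_sum fun i hi => c.sum_level_mul_le x i (hbelow i hi)
  have htop := c.sum_level_mul_le x (n + 1) hmax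
  have hr : ∑ i ∈ Icc ℓ n, c.r x i * b i = (∑ i ∈ Icc ℓ n, c.pSet x (c.level i) * b i) / D := by
    rw [sum_div]
    refine sum_congr rfl fun i hi => ?_
    rw [c.r_of_ne (by rw [mem_Icc] at hi; omega), hx, div_mul_eq_mul_div]
  rw [hr, le_div_iff₀ hD]
  linarith

end LevelChain

theorem upper_coefficients_ge_hitProb_general
    (c : LevelChain S) (hreach : c.Reachable)
    (h : ℕ → S → ℝ) (hh : c.IsHitProb h)
    (ℓ k : ℕ)
    (cf : ℕ → ℝ)
    (hcfdiag : cf ℓ = 1)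
    (hrec : ∀ j, ℓ < j → j ≤ k → ∀ x, c.lev x = j →
      cf j ≥ c.r x ℓ + ∑ i ∈ Finset.Icc (ℓ + 1) (j - 1), c.r x i * cf i) :
    ∀ j, ℓ < j → j ≤ k → ∀ x, c.lev x = j → cf j ≥ h ℓ x := by
  intro j
  induction j using Nat.strong_induction_on with
  | _ j IH =>
  intro hℓj hjk x hx
  obtain ⟨n, rfl⟩ : ∃ n, j = n + 1 := ⟨j - 1, by omega⟩
  obtain ⟨x₀, hx₀, hmax⟩ := (c.level (n + 1)).exists_max_image (h ℓ) ⟨x, c.mem_level.2 hx⟩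
  have hbelow : ∀ i ∈ Icc ℓ n, ∀ y ∈ c.level i, h ℓ y ≤ cf i := by
    intro i hi y hy
    rw [mem_Icc] at hi
    rw [c.mem_level] at hy
    rcases hi.1.eq_or_lt with rfl | hℓi
    · rw [hcfdiag, hh.2.1 _ y hy]
    · exact IH i (by omega) hℓi (by omega) y hy
  calc h ℓ x ≤ h ℓ x₀ := hmax x (c.mem_level.2 hx)
    _ ≤ ∑ i ∈ Icc ℓ n, c.r x₀ i * cf i :=
      c.hitProb_le_sum_r_mul_of_max hreach hh (by omega) cf (c.mem_level.1 hx₀) hmax hbelow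
    _ = c.r x₀ ℓ + ∑ i ∈ Icc (ℓ + 1) n, c.r x₀ i * cf i := by
      rw [← add_sum_Ioc_eq_sum_Icc (by omega), hcfdiag, mul_one, ← Icc_add_one_left_eq_Ioc]
    _ ≤ cf (n + 1) := by simpa using hrec (n + 1) hℓj hjk x₀ (c.mem_level.1 hx₀)

/-- Upper-bound drift condition: if `c_{ℓ,ℓ} = 1` and for every
`ℓ < j ≤ k` the coefficient satisfies
`c_{j,ℓ} ≥ max_{x∈S_j}( r(x,S_ℓ) + Σ_{i=ℓ+1}^{j−1} r(x,S_i)·c_{i,ℓ} )`,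
then `c_{j,ℓ} ≥ h_max(X_j,S_ℓ)` for every `ℓ < j ≤ k`. -/
theorem upper_coefficients_ge_hitProb
    (c : LevelChain S) (hreach : c.Reachable)
    (h : ℕ → S → ℝ) (hh : c.IsHitProb h)
    (ℓ k : ℕ) (hℓ : 1 ≤ ℓ) (hℓk : ℓ < k) (hk : k ≤ c.K)
    (cf : ℕ → ℝ)
    (hcf01 : ∀ j, ℓ ≤ j → j ≤ k → 0 ≤ cf j ∧ cf j ≤ 1)
    (hcfdiag : cf ℓ = 1)
    (hrec : ∀ j, ℓ < j → j ≤ k → ∀ x, c.lev x = j →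
      cf j ≥ c.r x ℓ + ∑ i ∈ Finset.Icc (ℓ + 1) (j - 1), c.r x i * cf i) :
    ∀ j, ℓ < j → j ≤ k → ∀ x, c.lev x = j → cf j ≥ h ℓ x :=
  upper_coefficients_ge_hitProb_general c hreach h hh ℓ k cf hcfdiag hrec
end
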